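/- Assume the Framework. Let p be a nonzero polynomial all of whose zeros lie in Ω, say with distinct zeros u₁, …, u_k of multiplicities r₁, …, r_k, and let p_H ∈ H be the element with ι p_H = p (it exists by (iv)). Then the closed linear span of {S^j p_H : j ≥ 0} equals {g ∈ H : for each 1 ≤ i ≤ k, (ι g)(u_i) = (ι g)′(u_i) = ⋯ = (ι g)^{(r_i − 1)}(u_i) = 0}, i.e. [p_H] consists exactly of those g ∈ H whose ι-image vanishes at every zero of p to at least the multiplicity of that zero. -/

import Mathlib

open scoped ComplexInnerProductSpace

/-- A Hilbert space `H` of analytic functions on a bounded domain `Ω ⊆ ℂ` with `0 ∈ Ω`,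
realized by an injective linear map `ι` into functions, satisfying conditions
(P1)–(P4) of Cheng–Mashreghi–Ross, together with its reproducing kernels. -/
structure RKFramework (Ω : Set ℂ) (H : Type*) [NormedAddCommGroup H]
    [InnerProductSpace ℂ H] [CompleteSpace H] where
  /-- `Ω` is open. -/
  isOpen : IsOpen Ω
  /-- `Ω` is connected. -/
  isConnected : IsConnected Ω
  /-- `Ω` is bounded. -/
  isBounded : Bornology.IsBounded Ω
  /-- `0 ∈ Ω`. -/
  zero_mem : (0 : ℂ) ∈ Ω
  /-- the realization of elements of `H` as functions (only values on `Ω` matter). -/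
  ι : H →ₗ[ℂ] (ℂ → ℂ)
  /-- `ι` is injective as a map into functions on `Ω`. -/
  ι_inj : ∀ f g : H, Set.EqOn (ι f) (ι g) Ω → f = g
  /-- each `ι f` is analytic on `Ω`. -/
  analytic : ∀ f : H, DifferentiableOn ℂ (ι f) Ω
  /-- (P1): point evaluation of every derivative is a bounded functional. -/
  eval_bounded : ∀ w ∈ Ω, ∀ j : ℕ, ∃ C : ℝ, ∀ f : H,
    ‖iteratedDerivWithin j (ι f) Ω w‖ ≤ C * ‖f‖
  /-- (P2): the shift operator `S`. -/
  S : H →L[ℂ] H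
  ι_S : ∀ f : H, ∀ z ∈ Ω, ι (S f) z = z * ι f z
  /-- (P3): the monomials `z^j` belong to `H` … -/
  p : ℕ → H
  ι_p : ∀ j : ℕ, ∀ z ∈ Ω, ι (p j) z = z ^ j
  /-- … and the polynomials are dense in `H`. -/
  span_p : (Submodule.span ℂ (Set.range p)).topologicalClosure = ⊤
  /-- (P4): the difference-quotient operators `Q_w`. -/
  Q : ℂ → H →L[ℂ] H
  ι_Q : ∀ w ∈ Ω, ∀ f : H, ∀ z ∈ Ω, z ≠ w → ι (Q w f) z = (ι f z - ι f w) / (z - w)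
  /-- the reproducing kernel `k_w` at `w ∈ Ω` … -/
  k : ℂ → H
  /-- … satisfying `⟪f, k_w⟫ = (ι f)(w)` (with the paper's inner product linear in its
  first slot; Mathlib's inner product is linear in the second slot). -/
  reproducing : ∀ w ∈ Ω, ∀ f : H, ⟪k w, f⟫ = ι f w

variable {Ω : Set ℂ} {H : Type*} [NormedAddCommGroup H] [InnerProductSpace ℂ H] [CompleteSpace H]

/-- `[zf]`: the closed linear span of `{S^n f : n ≥ 1}`. -/
abbrev RKFramework.zspan (F : RKFramework Ω H) (f : H) : Submodule ℂ H :=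
  (Submodule.span ℂ {x | ∃ n : ℕ, 1 ≤ n ∧ x = (F.S ^ n) f}).topologicalClosure

/-- `[f]`: the closed linear span of `{S^n f : n ≥ 0}`. -/
abbrev RKFramework.fullSpan (F : RKFramework Ω H) (f : H) : Submodule ℂ H :=
  (Submodule.span ℂ (Set.range fun n : ℕ => (F.S ^ n) f)).topologicalClosure

/-- The `S`-inner function `J = f − P_{[zf]} f` associated with `f`. -/
noncomputable def RKFramework.J (F : RKFramework Ω H) (f : H) : H :=
  f - (Submodule.orthogonalProjection (F.zspan f) f : H)

/-!
A functional `g ↦ (ι g)^{(s)}(u)` is bounded, so the vanishing conditions cut out a closed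
subspace; it contains every `S^n p_H`, whose `ι`-image `z^n p` vanishes at each zero of `p` to at
least its multiplicity, hence it contains `[p_H]`. Conversely, if `ι g` vanishes at the zeros of
`p` to their multiplicities, dividing out one linear factor `z - u` at a time with the
difference-quotient operators `Q_u` writes `g = p(S) h`, and `p(S)` maps the dense span of the
monomials `z^n` onto the `S^n p_H`, so it maps `H` into `[p_H]`. Vanishing orders are tracked
with `analyticOrderAt`, which is additive on products and equals `rootMultiplicity` on polynomials.
-/

open Polynomial

theorem Polynomial.analyticOrderAt_eval {𝕜 : Type*} [NontriviallyNormedField 𝕜] {p : 𝕜[X]}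
    (hp : p ≠ 0) (x : 𝕜) : analyticOrderAt (fun z => p.eval z) x = p.rootMultiplicity x := by
  obtain ⟨r, hpr, hr⟩ := p.exists_eq_pow_rootMultiplicity_mul_and_not_dvd hp x
  have hrx : r.eval x ≠ 0 := by rwa [dvd_iff_isRoot] at hr
  have hfun : (fun z => p.eval z) = (· - x) ^ p.rootMultiplicity x * fun z => r.eval z := by
    ext z
    conv_lhs => rw [hpr]
    simp
  rw [hfun, analyticOrderAt_mul (by fun_prop) (AnalyticOnNhd.eval_polynomial r x trivial),
    analyticOrderAt_centeredMonomial,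
    (analyticOrderAt_eq_zero (f := fun z => r.eval z)).mpr (.inr hrx), add_zero]

theorem natCast_le_analyticOrderAt_iff_iteratedDerivWithin_eq_zero {E : Type*}
    [NormedAddCommGroup E] [NormedSpace ℂ E] [CompleteSpace E] {s : Set ℂ} (hs : IsOpen s)
    {f : ℂ → E} (hf : DifferentiableOn ℂ f s) {x : ℂ} (hx : x ∈ s) {n : ℕ} :
    (n : ℕ∞) ≤ analyticOrderAt f x ↔ ∀ i < n, iteratedDerivWithin i f s x = 0 := by
  simp only [iteratedDerivWithin_of_isOpen hs hx]
  exact natCast_le_analyticOrderAt_iff_iteratedDeriv_eq_zero (hf.analyticAt (hs.mem_nhds hx))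

namespace RKFramework

variable (F : RKFramework Ω H)

theorem analyticAt_ι (f : H) {z : ℂ} (hz : z ∈ Ω) : AnalyticAt ℂ (F.ι f) z :=
  (F.analytic f).analyticAt (F.isOpen.mem_nhds hz)

theorem contDiffWithinAt_ι (f : H) {n : WithTop ℕ∞} {z : ℂ} (hz : z ∈ Ω) :
    ContDiffWithinAt ℂ n (F.ι f) Ω z :=
  ((F.analytic f).contDiffOn F.isOpen).contDiffWithinAt hz

theorem ι_pow_S_apply (n : ℕ) (f : H) {z : ℂ} (hz : z ∈ Ω) :
    F.ι ((F.S ^ n) f) z = z ^ n * F.ι f z := by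
  induction n generalizing f with
  | zero => simp
  | succ n ih => rw [pow_succ, mul_apply_eq_comp, ih, F.ι_S f z hz]; ring

theorem ι_aeval_S_apply (P : ℂ[X]) (f : H) {z : ℂ} (hz : z ∈ Ω) :
    F.ι (aeval F.S P f) z = P.eval z * F.ι f z := by
  induction P using Polynomial.induction_on' with
  | add p q hp hq => simp only [map_add, add_apply, Pi.add_apply, hp, hq, eval_add]; ring
  | monomial n a =>
    simp only [aeval_monomial, mul_apply_eq_comp, Algebra.algebraMap_eq_smul_one, smul_apply,
      one_apply_eq_self, map_smul, Pi.smul_apply, smul_eq_mul, eval_monomial,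
      F.ι_pow_S_apply n f hz]
    ring

noncomputable def iteratedDerivWithinCLM {u : ℂ} (hu : u ∈ Ω) (s : ℕ) : H →L[ℂ] ℂ :=
  LinearMap.mkContinuousOfExistsBound
    { toFun f := iteratedDerivWithin s (F.ι f) Ω u
      map_add' f g := by
        rw [map_add]
        exact iteratedDerivWithin_add hu F.isOpen.uniqueDiffOn (F.contDiffWithinAt_ι f hu)
          (F.contDiffWithinAt_ι g hu)
      map_smul' c f := by
        rw [map_smul]
        exact iteratedDerivWithin_const_smul hu F.isOpen.uniqueDiffOn c
          (F.contDiffWithinAt_ι f hu) }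
    (F.eval_bounded u hu s)

theorem iteratedDerivWithin_ι_eq_zero_of_mem_fullSpan {q : ℂ[X]} (hq : q ≠ 0) {pH : H}
    (hpH : ∀ z ∈ Ω, F.ι pH z = q.eval z) {u : ℂ} (hu : u ∈ Ω) {s : ℕ}
    (hs : s < q.rootMultiplicity u) {g : H} (hg : g ∈ F.fullSpan pH) :
    iteratedDerivWithin s (F.ι g) Ω u = 0 := by
  suffices F.fullSpan pH ≤ LinearMap.ker (F.iteratedDerivWithinCLM hu s : H →ₗ[ℂ] ℂ) from this hg
  refine Submodule.topologicalClosure_minimal _ ?_ (ContinuousLinearMap.isClosed_ker _)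
  rw [Submodule.span_le]
  rintro _ ⟨n, rfl⟩
  have hfun : Set.EqOn (F.ι ((F.S ^ n) pH)) (fun z => (X ^ n * q).eval z) Ω := fun z hz => by
    simp only [F.ι_pow_S_apply n pH hz, hpH z hz, eval_mul, eval_pow, eval_X]
  have hXq : (X ^ n * q : ℂ[X]) ≠ 0 := mul_ne_zero (pow_ne_zero n X_ne_zero) hq
  have horder : (q.rootMultiplicity u : ℕ∞) ≤ analyticOrderAt (F.ι ((F.S ^ n) pH)) u := by
    rw [analyticOrderAt_congr (hfun.eventuallyEq_of_mem (F.isOpen.mem_nhds hu)),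
      Polynomial.analyticOrderAt_eval hXq, rootMultiplicity_mul hXq]
    exact_mod_cast Nat.le_add_left _ _
  exact (natCast_le_analyticOrderAt_iff_iteratedDerivWithin_eq_zero F.isOpen (F.analytic _) hu).mp
    horder s hs

theorem aeval_S_mem_fullSpan {q : ℂ[X]} {pH : H} (hpH : ∀ z ∈ Ω, F.ι pH z = q.eval z) (h : H) :
    aeval F.S q h ∈ F.fullSpan pH := by
  set T : H →L[ℂ] H := aeval F.S q
  have hp : ∀ n, T (F.p n) = (F.S ^ n) pH := fun n => F.ι_inj _ _ fun z hz => by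
    rw [F.ι_aeval_S_apply q _ hz, F.ι_pow_S_apply n pH hz, F.ι_p n z hz, hpH z hz, mul_comm]
  have hle : (Submodule.span ℂ (Set.range F.p)).topologicalClosure ≤
      (F.fullSpan pH).comap (T : H →ₗ[ℂ] H) := by
    refine Submodule.topologicalClosure_minimal _ ?_
      ((Submodule.isClosed_topologicalClosure _).preimage T.continuous)
    rw [Submodule.span_le]
    rintro _ ⟨n, rfl⟩
    rw [SetLike.mem_coe, Submodule.mem_comap, ContinuousLinearMap.coe_coe, hp n]
    exact Submodule.le_topologicalClosure _ (Submodule.subset_span ⟨n, rfl⟩)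
  rw [F.span_p] at hle
  exact hle trivial

theorem ι_eq_sub_mul_ι_Q {u : ℂ} (hu : u ∈ Ω) {g : H} (hgu : F.ι g u = 0) :
    Set.EqOn (F.ι g) (fun z => (z - u) * F.ι (F.Q u g) z) Ω := fun z hz => by
  rcases eq_or_ne z u with rfl | hzu
  · simp [hgu]
  · dsimp only
    rw [F.ι_Q u hu g z hz hzu, hgu, sub_zero, mul_div_cancel₀ _ (sub_ne_zero.mpr hzu)]

theorem analyticOrderAt_ι_eq_rootMultiplicity_add {u v : ℂ} (hu : u ∈ Ω) (hv : v ∈ Ω) {g : H}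
    (hgu : F.ι g u = 0) :
    analyticOrderAt (F.ι g) v =
      (X - C u).rootMultiplicity v + analyticOrderAt (F.ι (F.Q u g)) v := by
  have hfun : (fun z => (z - u) * F.ι (F.Q u g) z) =
      (fun z => (X - C u).eval z) * F.ι (F.Q u g) := by
    ext z
    simp
  rw [analyticOrderAt_congr ((F.ι_eq_sub_mul_ι_Q hu hgu).eventuallyEq_of_mem
      (F.isOpen.mem_nhds hv)), hfun,
    analyticOrderAt_mul (AnalyticOnNhd.eval_polynomial _ v trivial) (F.analyticAt_ι _ hv),
    Polynomial.analyticOrderAt_eval (X_sub_C_ne_zero u)]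

theorem exists_ι_eq_eval_mul {q : ℂ[X]} (hq : q ≠ 0) (hroots : ∀ u, q.eval u = 0 → u ∈ Ω)
    {g : H} (hg : ∀ u ∈ Ω, (q.rootMultiplicity u : ℕ∞) ≤ analyticOrderAt (F.ι g) u) :
    ∃ h : H, ∀ z ∈ Ω, F.ι g z = q.eval z * F.ι h z := by
  induction hd : q.natDegree generalizing q g with
  | zero =>
    obtain ⟨c, rfl⟩ := natDegree_eq_zero.mp hd
    have hc : c ≠ 0 := by rintro rfl; exact hq C_0
    refine ⟨c⁻¹ • g, fun z _ => ?_⟩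
    simp [hc]
  | succ n ih =>
    obtain ⟨u, hu⟩ := IsAlgClosed.exists_root q (by rw [degree_eq_natDegree hq, hd]; norm_cast)
    have huΩ := hroots u hu
    obtain ⟨q₁, rfl⟩ := dvd_iff_isRoot.mpr hu
    have hq₁ := right_ne_zero_of_mul hq
    have hgu : F.ι g u = 0 := apply_eq_zero_of_analyticOrderAt_ne_zero <| by
      have := hg u huΩ
      rw [rootMultiplicity_mul hq, rootMultiplicity_X_sub_C_self] at this
      exact ne_bot_of_le_ne_bot (by simp) this
    obtain ⟨h, hh⟩ := ih hq₁ (fun v hv => hroots v (by simp [hv]))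
      (g := F.Q u g) (fun v hv => by
        have := hg v hv
        rw [F.analyticOrderAt_ι_eq_rootMultiplicity_add huΩ hv hgu, rootMultiplicity_mul hq,
          Nat.cast_add] at this
        exact (ENat.add_le_add_iff_left (ENat.natCast_ne_top _)).mp this)
      (by rw [natDegree_mul (X_sub_C_ne_zero u) hq₁, natDegree_X_sub_C] at hd; omega)
    refine ⟨h, fun z hz => ?_⟩
    simp only [F.ι_eq_sub_mul_ι_Q huΩ hgu hz, hh z hz, eval_mul, eval_sub, eval_X, eval_C]
    ring

end RKFramework

/-- Lemma 4.1: for a nonzero polynomial `p` with all zeros in `Ω`, realized as `pH ∈ H`,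
the invariant subspace `[pH]` consists exactly of the `g ∈ H` whose `ι`-image vanishes
at every zero of `p` to at least the multiplicity of that zero. -/
theorem stmt5 (F : RKFramework Ω H)
    (q : Polynomial ℂ) (hq : q ≠ 0) (hroots : ∀ z : ℂ, q.eval z = 0 → z ∈ Ω)
    (pH : H) (hpH : ∀ z ∈ Ω, F.ι pH z = q.eval z) :
    ((F.fullSpan pH : Submodule ℂ H) : Set H) =
      {g : H | ∀ u : ℂ, q.eval u = 0 →
        ∀ s : ℕ, s < q.rootMultiplicity u → iteratedDerivWithin s (F.ι g) Ω u = 0} := by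
  ext g
  refine ⟨fun hg u hu s hs =>
    F.iteratedDerivWithin_ι_eq_zero_of_mem_fullSpan hq hpH (hroots u hu) hs hg, fun hg => ?_⟩
  obtain ⟨h, hh⟩ := F.exists_ι_eq_eval_mul hq hroots fun u hu =>
    (natCast_le_analyticOrderAt_iff_iteratedDerivWithin_eq_zero F.isOpen (F.analytic g) hu).mpr
      fun s hs => hg u ((rootMultiplicity_pos hq).mp (by omega)) s hs
  have hgh : g = aeval F.S q h :=
    F.ι_inj _ _ fun z hz => by rw [hh z hz, F.ι_aeval_S_apply q h hz]
  rw [hgh]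
  exact F.aeval_S_mem_fullSpan hpH h
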